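/- Let H and H' be discretely valued hyperfields whose absolute values take some value other than 0 and 1 and whose norms are positive (equivalently, neither is a field), and let f : H → H' be an isomorphism of hyperfields. Then f preserves the ordering of absolute values: for all x, y ∈ H, |x| ≤ |y| if and only if |f(x)| ≤ |f(y)|. -/

import Mathlib

/-- A (Krasner) valued hyperfield: a hyperfield with a multivalued addition,
single-valued multiplication, an absolute value, the induced distance `dist`,
and the norm `rho`. -/
structure ValuedHyperfield where
  carrier : Type
  add : carrier → carrier → Set carrier
  mul : carrier → carrier → carrier
  zero : carrier
  one : carrier
  neg : carrier → carrier
  abs : carrier → ℝ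
  dist : carrier → carrier → ℝ
  rho : ℝ
  add_comm : ∀ x y, add x y = add y x
  add_assoc : ∀ x y z, (⋃ t ∈ add x y, add t z) = ⋃ t ∈ add y z, add x t
  add_zero : ∀ x, add x zero = {x}
  neg_mem : ∀ x, zero ∈ add x (neg x)
  neg_unique : ∀ x y, zero ∈ add x y → y = neg x
  reverse : ∀ x y z, x ∈ add y (neg z) ↔ y ∈ add x z
  mul_comm : ∀ x y, mul x y = mul y x
  mul_assoc : ∀ x y z, mul (mul x y) z = mul x (mul y z)
  mul_one : ∀ x, mul x one = x
  one_ne_zero : one ≠ zero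
  mul_inv : ∀ x, x ≠ zero → ∃ y, mul x y = one
  distrib : ∀ x y z, (fun t => mul t z) '' add x y ⊆ add (mul x z) (mul y z)
  abs_nonneg : ∀ x, 0 ≤ abs x
  abs_eq_zero_iff : ∀ x, abs x = 0 ↔ x = zero
  abs_mul : ∀ x y, abs (mul x y) = abs x * abs y
  abs_add_le : ∀ x y z, z ∈ add x y → abs z ≤ max (abs x) (abs y)
  abs_add_unique : ∀ x y, zero ∉ add x y →
    ∀ z w, z ∈ add x y → w ∈ add x y → abs z = abs w
  dist_self : ∀ x, dist x x = 0
  dist_eq : ∀ x y z, x ≠ y → z ∈ add x (neg y) → dist x y = abs z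
  rho_nonneg : 0 ≤ rho
  rho_ball : ∀ x y, (∃ w, add x y = {z | dist z w ≤ rho * max (abs x) (abs y)}) ∨
      (∃ w, add x y = {z | dist z w < rho * max (abs x) (abs y)})
  rho_min : ∀ r : ℝ, 0 ≤ r →
      (∀ x y, (∃ w, add x y = {z | dist z w ≤ r * max (abs x) (abs y)}) ∨
        (∃ w, add x y = {z | dist z w < r * max (abs x) (abs y)})) → rho ≤ r

/-- The valuation is discrete: every nonzero value of the absolute value is an
isolated point of the image of the absolute value. -/
def ValuedHyperfield.Discrete (V : ValuedHyperfield) : Prop :=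
  ∀ r ∈ Set.range V.abs, r ≠ 0 →
    ∃ ε > (0 : ℝ), ∀ s ∈ Set.range V.abs, |s - r| < ε → s = r

/-- `θ` is the largest absolute value which is strictly less than 1, attained
at some nonzero element. -/
def ValuedHyperfield.IsTheta (V : ValuedHyperfield) (θ : ℝ) : Prop :=
  (∃ x, x ≠ V.zero ∧ V.abs x = θ) ∧ θ < 1 ∧
    ∀ x, x ≠ V.zero → V.abs x < 1 → V.abs x ≤ θ

/-- An isomorphism of the underlying hyperfields: a multiplicative and additive
bijection (not required to preserve the absolute values). -/
def IsHyperfieldIso (V W : ValuedHyperfield) (f : V.carrier → W.carrier) : Prop :=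
  Function.Bijective f ∧ (∀ x y, f (V.mul x y) = W.mul (f x) (f y)) ∧
    ∀ x y, f '' V.add x y = W.add (f x) (f y)

/-!
The sumset `S(x) = x + (-x)` is a closed or open ball of radius `ρ |x|` about `0`, and
`S(x) = S(1) · x`. By the first fact `S(y)` is closed under passing to elements of smaller
absolute value, so if `|x| ≤ |y|` then `w x ∈ S(y)` for every `w ∈ S(1)`, i.e. `S(x) ⊆ S(y)`.
The second fact gives `sup |S(x)| = |x| · sup |S(1)|`, where `sup |S(1)| > 0` because `S(1)`
contains small powers of any element of absolute value in `(0, 1)`, so `S(x) ⊆ S(y)` gives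
`|x| ≤ |y|`. Since `S` is
defined purely in terms of the hyperfield structure, an isomorphism transports the inclusions.
-/

open Pointwise

namespace ValuedHyperfield

variable (V : ValuedHyperfield)

lemma abs_zero : V.abs V.zero = 0 := (V.abs_eq_zero_iff _).mpr rfl

lemma zero_add (x : V.carrier) : V.add V.zero x = {x} := by
  rw [V.add_comm, V.add_zero]

lemma neg_zero : V.neg V.zero = V.zero :=
  (V.neg_unique _ _ (by rw [V.add_zero]; rfl)).symm

lemma neg_neg (x : V.carrier) : V.neg (V.neg x) = x :=
  (V.neg_unique _ _ (by rw [V.add_comm]; exact V.neg_mem x)).symm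

lemma mul_zero (x : V.carrier) : V.mul x V.zero = V.zero := by
  rw [← V.abs_eq_zero_iff, V.abs_mul, V.abs_zero, MulZeroClass.mul_zero]

lemma zero_mul (x : V.carrier) : V.mul V.zero x = V.zero := by
  rw [V.mul_comm, V.mul_zero]

lemma one_mul (x : V.carrier) : V.mul V.one x = x := by
  rw [V.mul_comm, V.mul_one]

lemma abs_one : V.abs V.one = 1 := by
  have h := V.abs_mul V.one V.one
  rw [V.mul_one, eq_comm, mul_eq_left₀] at h
  · exact h
  · exact fun h0 => V.one_ne_zero ((V.abs_eq_zero_iff _).mp h0)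

lemma abs_mul_eq_one {x y : V.carrier} (h : V.mul x y = V.one) : V.abs x * V.abs y = 1 := by
  rw [← V.abs_mul, h, V.abs_one]

lemma neg_one_mul (x : V.carrier) : V.mul (V.neg V.one) x = V.neg x := by
  have h : V.mul V.zero x ∈ _ := V.distrib V.one (V.neg V.one) x ⟨V.zero, V.neg_mem _, rfl⟩
  rw [V.zero_mul, V.one_mul] at h
  exact V.neg_unique _ _ h

lemma neg_mul (a x : V.carrier) : V.mul (V.neg a) x = V.neg (V.mul a x) := by
  rw [← V.neg_one_mul a, V.mul_assoc, V.neg_one_mul]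

lemma abs_neg_one : V.abs (V.neg V.one) = 1 := by
  have h := V.abs_mul_eq_one (x := V.neg V.one) (y := V.neg V.one)
    (by rw [V.neg_one_mul, V.neg_neg])
  nlinarith [V.abs_nonneg (V.neg V.one)]

lemma abs_neg (x : V.carrier) : V.abs (V.neg x) = V.abs x := by
  rw [← V.neg_one_mul, V.abs_mul, V.abs_neg_one, _root_.one_mul]

lemma exists_abs_pos_lt_one (hval : ∃ x : V.carrier, V.abs x ≠ 0 ∧ V.abs x ≠ 1) :
    ∃ w : V.carrier, 0 < V.abs w ∧ V.abs w < 1 := by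
  obtain ⟨x, hx0, hx1⟩ := hval
  have hx : 0 < V.abs x := (V.abs_nonneg x).lt_of_ne' hx0
  rcases hx1.lt_or_gt with hlt | hgt
  · exact ⟨x, hx, hlt⟩
  · obtain ⟨t, ht⟩ := V.mul_inv x fun h => hx0 ((V.abs_eq_zero_iff x).mpr h)
    have hxt := V.abs_mul_eq_one ht
    refine ⟨t, pos_of_mul_pos_right (hxt ▸ one_pos) hx.le, ?_⟩
    nlinarith [V.abs_nonneg t]

def pow (w : V.carrier) : ℕ → V.carrier
  | 0 => V.one
  | n + 1 => V.mul w (pow w n)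

lemma abs_pow (w : V.carrier) (n : ℕ) : V.abs (V.pow w n) = V.abs w ^ n := by
  induction n with
  | zero => exact V.abs_one
  | succ n ih => rw [pow, V.abs_mul, ih, _root_.pow_succ']

lemma dist_zero_right (z : V.carrier) : V.dist z V.zero = V.abs z := by
  by_cases hz : z = V.zero
  · rw [hz, V.dist_self, V.abs_zero]
  · exact V.dist_eq z V.zero z hz (by rw [V.neg_zero, V.add_zero]; rfl)

lemma neg_mem_add_neg {x y v : V.carrier} (hv : v ∈ V.add x (V.neg y)) :
    V.neg v ∈ V.add y (V.neg x) := by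
  have hx : x ∈ V.add y (V.neg (V.neg v)) := by
    rw [V.neg_neg, V.add_comm]; exact (V.reverse v x y).mp hv
  rw [V.reverse, V.add_comm]
  exact (V.reverse x y _).mp hx

lemma add_nonempty (hρ : 0 < V.rho) (x y : V.carrier) : (V.add x y).Nonempty := by
  by_cases hx : x = V.zero
  · rw [hx, V.zero_add]; exact Set.singleton_nonempty y
  have hr : 0 < V.rho * max (V.abs x) (V.abs y) :=
    mul_pos hρ (lt_max_of_lt_left ((V.abs_nonneg x).lt_of_ne'
      fun h => hx ((V.abs_eq_zero_iff x).mp h)))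
  rcases V.rho_ball x y with ⟨w, hw⟩ | ⟨w, hw⟩
  · exact ⟨w, by rw [hw]; exact (V.dist_self w).trans_le hr.le⟩
  · exact ⟨w, by rw [hw]; exact (V.dist_self w).trans_lt hr⟩

lemma dist_comm (hρ : 0 < V.rho) (x y : V.carrier) : V.dist x y = V.dist y x := by
  rcases eq_or_ne x y with rfl | hxy
  · rfl
  obtain ⟨v, hv⟩ := V.add_nonempty hρ x (V.neg y)
  rw [V.dist_eq x y v hxy hv, V.dist_eq y x _ hxy.symm (V.neg_mem_add_neg hv), V.abs_neg]

lemma dist_nonneg (hρ : 0 < V.rho) (x y : V.carrier) : 0 ≤ V.dist x y := by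
  rcases eq_or_ne x y with rfl | hxy
  · exact (V.dist_self x).ge
  obtain ⟨v, hv⟩ := V.add_nonempty hρ x (V.neg y)
  exact (V.dist_eq x y v hxy hv).symm ▸ V.abs_nonneg v

lemma dist_le_max (hρ : 0 < V.rho) (x y z : V.carrier) :
    V.dist x z ≤ max (V.dist x y) (V.dist y z) := by
  rcases eq_or_ne x z with rfl | hxz
  · exact (V.dist_self x).trans_le (le_max_of_le_left (V.dist_nonneg hρ x y))
  rcases eq_or_ne x y with rfl | hxy
  · exact le_max_right _ _
  rcases eq_or_ne y z with rfl | hyz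
  · exact le_max_left _ _
  obtain ⟨u, hu⟩ := V.add_nonempty hρ x (V.neg y)
  obtain ⟨v, hv⟩ := V.add_nonempty hρ y (V.neg z)
  have hx : x ∈ ⋃ t ∈ V.add u v, V.add t z := by
    rw [V.add_assoc]
    exact Set.mem_biUnion ((V.reverse v y z).mp hv) ((V.reverse u x y).mp hu)
  obtain ⟨t, ht, hxt⟩ := Set.mem_iUnion₂.mp hx
  rw [V.dist_eq x z t hxz ((V.reverse t x z).mpr hxt), V.dist_eq x y u hxy hu,
    V.dist_eq y z v hyz hv]
  exact V.abs_add_le u v t ht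

def subSelf (x : V.carrier) : Set V.carrier := V.add x (V.neg x)

lemma zero_mem_subSelf (x : V.carrier) : V.zero ∈ V.subSelf x := V.neg_mem x

lemma subSelf_eq_ball (hρ : 0 < V.rho) (a : V.carrier) :
    V.subSelf a = {z | V.abs z ≤ V.rho * V.abs a} ∨
      V.subSelf a = {z | V.abs z < V.rho * V.abs a} := by
  -- in an ultrametric space a ball around `w` that contains `0` is also the ball around `0`
  have habs (z w : V.carrier) : V.abs z ≤ max (V.dist z w) (V.dist V.zero w) := by
    rw [← V.dist_zero_right, V.dist_comm hρ V.zero]; exact V.dist_le_max hρ z w V.zero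
  have hdist (z w : V.carrier) : V.dist z w ≤ max (V.abs z) (V.dist V.zero w) := by
    rw [← V.dist_zero_right]; exact V.dist_le_max hρ z V.zero w
  have h0 := V.zero_mem_subSelf a
  have hmax : max (V.abs a) (V.abs (V.neg a)) = V.abs a := by rw [V.abs_neg, max_self]
  rcases V.rho_ball a (V.neg a) with ⟨w, hw⟩ | ⟨w, hw⟩ <;>
    rw [hmax] at hw <;> rw [subSelf, hw] at h0 ⊢
  · refine .inl (Set.ext fun z => ⟨fun hz => ?_, fun hz => ?_⟩)
    exacts [(habs z w).trans (max_le hz h0), (hdist z w).trans (max_le hz h0)]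
  · refine .inr (Set.ext fun z => ⟨fun hz => ?_, fun hz => ?_⟩)
    exacts [(habs z w).trans_lt (max_lt hz h0), (hdist z w).trans_lt (max_lt hz h0)]

lemma abs_le_of_mem_subSelf (hρ : 0 < V.rho) {a z : V.carrier} (hz : z ∈ V.subSelf a) :
    V.abs z ≤ V.rho * V.abs a := by
  rcases V.subSelf_eq_ball hρ a with h | h <;> rw [h] at hz
  exacts [hz, hz.le]

lemma mem_subSelf_of_abs_lt (hρ : 0 < V.rho) {a z : V.carrier}
    (hz : V.abs z < V.rho * V.abs a) : z ∈ V.subSelf a := by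
  rcases V.subSelf_eq_ball hρ a with h | h <;> rw [h]
  exacts [hz.le, hz]

lemma mem_subSelf_of_abs_le (hρ : 0 < V.rho) {a z z' : V.carrier} (hz : z ∈ V.subSelf a)
    (hz' : V.abs z' ≤ V.abs z) : z' ∈ V.subSelf a := by
  rcases V.subSelf_eq_ball hρ a with h | h <;> rw [h] at hz ⊢
  exacts [hz'.trans hz, hz'.trans_lt hz]

lemma mul_mem_subSelf_mul {x z : V.carrier} (hz : z ∈ V.subSelf x) (u : V.carrier) :
    V.mul z u ∈ V.subSelf (V.mul x u) := by
  rw [subSelf, ← V.neg_mul]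
  exact V.distrib x (V.neg x) u ⟨z, hz, rfl⟩

lemma mul_mem_subSelf {w : V.carrier} (hw : w ∈ V.subSelf V.one) (a : V.carrier) :
    V.mul w a ∈ V.subSelf a := by
  simpa only [V.one_mul] using V.mul_mem_subSelf_mul hw a

lemma subSelf_eq_image_mul (a : V.carrier) :
    V.subSelf a = (fun w => V.mul w a) '' V.subSelf V.one := by
  ext z
  refine ⟨fun hz => ?_, ?_⟩
  · rcases eq_or_ne a V.zero with rfl | ha
    · rw [subSelf, V.neg_zero, V.add_zero, Set.mem_singleton_iff] at hz
      exact ⟨V.zero, V.zero_mem_subSelf _, show V.mul _ _ = z by rw [V.zero_mul, hz]⟩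
    obtain ⟨t, ht⟩ := V.mul_inv a ha
    refine ⟨V.mul z t, ht ▸ V.mul_mem_subSelf_mul hz t, ?_⟩
    change V.mul (V.mul z t) a = z
    rw [V.mul_assoc, V.mul_comm t, ht, V.mul_one]
  · rintro ⟨w, hw, rfl⟩
    exact V.mul_mem_subSelf hw a

lemma sSup_abs_subSelf (a : V.carrier) :
    sSup (V.abs '' V.subSelf a) = V.abs a * sSup (V.abs '' V.subSelf V.one) := by
  have h : V.abs '' V.subSelf a = V.abs a • V.abs '' V.subSelf V.one := by
    rw [subSelf_eq_image_mul, Set.image_image, ← Set.image_smul, Set.image_image]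
    simp only [V.abs_mul, smul_eq_mul, mul_comm]
  rw [h, Real.sSup_smul_of_nonneg (V.abs_nonneg a), smul_eq_mul]

lemma exists_mem_subSelf_one_abs_pos (hval : ∃ x : V.carrier, V.abs x ≠ 0 ∧ V.abs x ≠ 1)
    (hρ : 0 < V.rho) : ∃ z ∈ V.subSelf V.one, 0 < V.abs z := by
  obtain ⟨w, hw0, hw1⟩ := V.exists_abs_pos_lt_one hval
  obtain ⟨n, hn⟩ := exists_pow_lt_of_lt_one hρ hw1
  refine ⟨V.pow w n, V.mem_subSelf_of_abs_lt hρ ?_, ?_⟩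
  · rwa [V.abs_pow, V.abs_one, _root_.mul_one]
  · rw [V.abs_pow]; positivity

lemma subSelf_subset_subSelf_iff (hval : ∃ x : V.carrier, V.abs x ≠ 0 ∧ V.abs x ≠ 1)
    (hρ : 0 < V.rho) (x y : V.carrier) : V.subSelf x ⊆ V.subSelf y ↔ V.abs x ≤ V.abs y := by
  have hbdd (a : V.carrier) : BddAbove (V.abs '' V.subSelf a) :=
    ⟨V.rho * V.abs a, Set.forall_mem_image.mpr fun _ => V.abs_le_of_mem_subSelf hρ⟩
  refine ⟨fun hxy => ?_, fun hxy => ?_⟩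
  · obtain ⟨z, hz, hz0⟩ := V.exists_mem_subSelf_one_abs_pos hval hρ
    have hsup : 0 < sSup (V.abs '' V.subSelf V.one) :=
      hz0.trans_le (le_csSup (hbdd V.one) ⟨z, hz, rfl⟩)
    have h := csSup_le_csSup (hbdd y) ((Set.nonempty_of_mem (V.zero_mem_subSelf x)).image _)
      (Set.image_mono hxy)
    rw [V.sSup_abs_subSelf x, V.sSup_abs_subSelf y] at h
    exact le_of_mul_le_mul_right h hsup
  · rw [V.subSelf_eq_image_mul x]
    rintro _ ⟨w, hw, rfl⟩
    refine V.mem_subSelf_of_abs_le hρ (V.mul_mem_subSelf hw y) ?_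
    rw [V.abs_mul, V.abs_mul]
    exact mul_le_mul_of_nonneg_left hxy (V.abs_nonneg w)

end ValuedHyperfield

namespace IsHyperfieldIso

variable {V W : ValuedHyperfield} {f : V.carrier → W.carrier}

lemma map_zero (hf : IsHyperfieldIso V W f) : f V.zero = W.zero := by
  have h : W.add W.zero (f V.zero) = {W.zero} := by
    obtain ⟨x, hx⟩ := hf.1.2 W.zero
    rw [← hx, ← hf.2.2, V.add_zero, Set.image_singleton]
  rw [W.zero_add] at h
  exact Set.singleton_eq_singleton_iff.mp h

lemma map_neg (hf : IsHyperfieldIso V W f) (x : V.carrier) : f (V.neg x) = W.neg (f x) :=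
  W.neg_unique _ _ (hf.2.2 x (V.neg x) ▸ ⟨V.zero, V.neg_mem x, hf.map_zero⟩)

lemma image_subSelf (hf : IsHyperfieldIso V W f) (x : V.carrier) :
    f '' V.subSelf x = W.subSelf (f x) := by
  rw [ValuedHyperfield.subSelf, ValuedHyperfield.subSelf, hf.2.2, hf.map_neg]

end IsHyperfieldIso

theorem stmt13_general (V W : ValuedHyperfield)
    (hvalV : ∃ x : V.carrier, V.abs x ≠ 0 ∧ V.abs x ≠ 1)
    (hvalW : ∃ x : W.carrier, W.abs x ≠ 0 ∧ W.abs x ≠ 1)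
    (hρV : 0 < V.rho) (hρW : 0 < W.rho)
    (f : V.carrier → W.carrier) (hf : IsHyperfieldIso V W f) :
    ∀ x y : V.carrier, V.abs x ≤ V.abs y ↔ W.abs (f x) ≤ W.abs (f y) := by
  intro x y
  rw [← V.subSelf_subset_subSelf_iff hvalV hρV, ← W.subSelf_subset_subSelf_iff hvalW hρW,
    ← hf.image_subSelf, ← hf.image_subSelf, Set.image_subset_image_iff hf.1.1]

theorem stmt13 (V W : ValuedHyperfield)
    (hdiscV : V.Discrete) (hdiscW : W.Discrete)
    (hvalV : ∃ x : V.carrier, V.abs x ≠ 0 ∧ V.abs x ≠ 1)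
    (hvalW : ∃ x : W.carrier, W.abs x ≠ 0 ∧ W.abs x ≠ 1)
    (hρV : 0 < V.rho) (hρW : 0 < W.rho)
    (f : V.carrier → W.carrier) (hf : IsHyperfieldIso V W f) :
    ∀ x y : V.carrier, V.abs x ≤ V.abs y ↔ W.abs (f x) ≤ W.abs (f y) :=
  stmt13_general V W hvalV hvalW hρV hρW f hf
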